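/- arXiv:1111.4976 — 5 statements merged into one kernel-verified Lean document; each statement's English description precedes it below -/
import Mathlib

section
/- For every k > 0, (√k/π) ∫₀^{π/4} dx/√(k + sec(x)²) = (1/(2π)) · arcsec(k+1), i.e. the integral ∫₀^{π/4} dx/√(k + sec(x)²) equals arccos(1/(k+1))/(2√k). -/
open Real MeasureTheory

/-! Substituting `u = sin x` turns the integrand into `1 / √(k + 1 - k u²)`, whose primitive is
`arcsin (√(k / (k + 1)) u) / √k`; at `x = π / 4` the double-angle formula
`cos (2 arcsin s) = 1 - 2 s²` converts the arcsine into `arccos (1 / (k + 1)) / 2`. -/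

lemma one_div_sqrt_add_one_div_cos_sq (k : ℝ) {x : ℝ} (hx : 0 < cos x) :
    1 / √(k + (1 / cos x) ^ 2) = cos x / √(k + 1 - k * sin x ^ 2) := by
  have h : k + (1 / cos x) ^ 2 = (k + 1 - k * sin x ^ 2) / cos x ^ 2 := by
    rw [sin_sq]; field_simp; ring
  rw [h, sqrt_div' _ (sq_nonneg _), sqrt_sq hx.le, one_div_div]

lemma hasDerivAt_arcsin_sqrt_div_mul_div_sqrt {a b u : ℝ} (ha : 0 < a) (hb : 0 < b)
    (hu : b * u ^ 2 < a) :
    HasDerivAt (fun u ↦ arcsin (√(b / a) * u) / √b) (1 / √(a - b * u ^ 2)) u := by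
  have hsq : (√(b / a) * u) ^ 2 = b * u ^ 2 / a := by
    rw [mul_pow, sq_sqrt (div_pos hb ha).le]; ring
  have hlt : (√(b / a) * u) ^ 2 < 1 := by rwa [hsq, div_lt_one ha]
  have h₁ : -1 < √(b / a) * u := by nlinarith
  have h₂ : √(b / a) * u < 1 := by nlinarith
  refine (((hasDerivAt_arcsin h₁.ne' h₂.ne).comp u
    ((hasDerivAt_id u).const_mul √(b / a))).div_const √b).congr_deriv ?_
  have hab : 0 < a - b * u ^ 2 := by linarith
  rw [hsq, one_sub_div ha.ne', sqrt_div' _ ha.le, sqrt_div' _ ha.le]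
  field_simp

lemma two_mul_arcsin_eq_arccos {s : ℝ} (h₀ : 0 ≤ s) (h₁ : s ≤ 1) :
    2 * arcsin s = arccos (1 - 2 * s ^ 2) := by
  have hθ₀ := arcsin_nonneg.mpr h₀
  have hθ₁ := arcsin_le_pi_div_two s
  calc 2 * arcsin s = arccos (cos (2 * arcsin s)) := (arccos_cos (by linarith) (by linarith)).symm
    _ = arccos (1 - 2 * s ^ 2) := by
      rw [cos_two_mul, cos_sq', sin_arcsin (by linarith) h₁]; ring_nf

lemma two_mul_arcsin_sqrt_div_mul_sqrt_two_div_two {k : ℝ} (hk : 0 ≤ k) :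
    2 * arcsin (√(k / (k + 1)) * (√2 / 2)) = arccos (1 / (k + 1)) := by
  set s := √(k / (k + 1)) * (√2 / 2)
  have hs : s ^ 2 = k / (k + 1) / 2 := by
    rw [mul_pow, div_pow, sq_sqrt (by positivity), sq_sqrt zero_le_two]; ring
  have hs₁ : s ≤ 1 := by
    have : k / (k + 1) < 1 := (div_lt_one (by linarith)).2 (by linarith)
    nlinarith
  rw [two_mul_arcsin_eq_arccos (by positivity) hs₁, hs]
  congr 1
  field_simp
  ring

/-- For every `k > 0`,
`(√k/π) ∫₀^{π/4} dx/√(k + sec(x)²) = (1/(2π)) · arcsec(k+1)`,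
i.e. `∫₀^{π/4} dx/√(k + (1/cos x)²) = arccos(1/(k+1)) / (2√k)`. -/
theorem stmt0 (k : ℝ) (hk : 0 < k) :
    ∫ x in (0:ℝ)..(π/4), 1 / Real.sqrt (k + (1 / Real.cos x)^2)
      = Real.arccos (1/(k+1)) / (2 * Real.sqrt k) := by
  have hcos : ∀ x ∈ Set.uIcc 0 (π / 4), 0 < cos x := fun x hx ↦ by
    rw [Set.uIcc_of_le (by positivity)] at hx
    exact cos_pos_of_mem_Ioo ⟨by linarith [hx.1, pi_pos], by linarith [hx.2, pi_pos]⟩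
  have hpos : ∀ x, 0 < k + 1 - k * sin x ^ 2 := fun x ↦ by nlinarith [sin_sq_le_one x]
  have hF : ∀ x, HasDerivAt (fun x ↦ arcsin (√(k / (k + 1)) * sin x) / √k)
      (cos x / √(k + 1 - k * sin x ^ 2)) x := fun x ↦
    ((hasDerivAt_arcsin_sqrt_div_mul_div_sqrt (a := k + 1) (by linarith) hk
      (by linarith [hpos x])).comp x (hasDerivAt_sin x)).congr_deriv (one_div_mul_eq_div _ _)
  have hint : IntervalIntegrable (fun x ↦ cos x / √(k + 1 - k * sin x ^ 2)) volume 0 (π / 4) :=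
    (continuous_cos.div (by fun_prop) fun x ↦ (sqrt_pos.2 (hpos x)).ne').intervalIntegrable _ _
  rw [intervalIntegral.integral_congr fun x hx ↦ one_div_sqrt_add_one_div_cos_sq k (hcos x hx),
    intervalIntegral.integral_eq_sub_of_hasDerivAt (fun x _ ↦ hF x) hint]
  simp only [sin_zero, mul_zero, arcsin_zero, zero_div, sub_zero, sin_pi_div_four]
  rw [← two_mul_arcsin_sqrt_div_mul_sqrt_two_div_two hk.le, mul_div_mul_left _ _ two_ne_zero]
end

section
/- Let F be the standard normal CDF, F(x) = (1/2)(1 + erf(x/√2)). Then ∫_{-∞}^{∞} {1 - F(x)² - (1-F(x))²} dx = 2/√π. -/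
/-!
Since `1 - F² - (1 - F)² = 2 F (1 - F)`, two integrations by parts (with `φ' = -x φ`) give the
primitive `2 x F (1 - F) + 2 φ (1 - 2 F) + (2 / √π) F (√2 x)`, where the last term accounts for
`4 φ²` because `φ(x)² = φ(√2 x) / √(2π)`. The boundary term `x F (1 - F)` vanishes at `±∞` by
Mills' inequality `x (1 - F x) ≤ φ x`, so the primitive runs from `0` to `2 / √π`. The integrand
is nonnegative, which makes it integrable for free.
-/

open Real MeasureTheory

/-- The standard normal cumulative distribution function. -/
noncomputable def normalCDF (x : ℝ) : ℝ :=
  ∫ t in Set.Iic x, Real.exp (-t^2/2) / Real.sqrt (2*π)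

open ProbabilityTheory Filter Set Topology

theorem integrable_deriv_of_nonneg {g g' : ℝ → ℝ} {m n : ℝ}
    (hderiv : ∀ x, HasDerivAt g (g' x) x) (hg' : ∀ x, 0 ≤ g' x)
    (hbot : Tendsto g atBot (𝓝 m)) (htop : Tendsto g atTop (𝓝 n)) : Integrable g' := by
  have hIoi : IntegrableOn g' (Ioi 0) :=
    integrableOn_Ioi_deriv_of_nonneg' (fun x _ ↦ hderiv x) (fun x _ ↦ hg' x) htop
  have hIio : IntegrableOn g' (Iio 0) := by
    have hneg : IntegrableOn (g' ∘ Neg.neg) (Ioi 0) :=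
      integrableOn_Ioi_deriv_of_nonneg' (g := -(g ∘ Neg.neg))
        (fun x _ ↦ by simpa using ((hderiv (-x)).comp x (hasDerivAt_neg x)).neg)
        (fun x _ ↦ hg' (-x)) (hbot.comp tendsto_neg_atTop_atBot).neg
    rw [← (Measure.measurePreserving_neg volume).integrableOn_comp_preimage
      (Homeomorph.neg ℝ).measurableEmbedding]
    simpa using hneg
  rw [← integrableOn_univ, ← Iio_union_Ici]
  exact hIio.union ((integrableOn_Ici_iff_integrableOn_Ioi).2 hIoi)

theorem hasDerivAt_setIntegral_Iic {f : ℝ → ℝ} (hf : Integrable f) (hcont : Continuous f)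
    (x : ℝ) : HasDerivAt (fun y ↦ ∫ t in Iic y, f t) (f x) x := by
  have hsplit : (fun y ↦ ∫ t in Iic y, f t) = fun y ↦ (∫ t in Iic 0, f t) + ∫ t in 0..y, f t := by
    ext y
    rw [← intervalIntegral.integral_Iic_sub_Iic hf.integrableOn hf.integrableOn]
    ring
  rw [hsplit]
  exact (intervalIntegral.integral_hasDerivAt_right hf.intervalIntegrable
    hcont.aestronglyMeasurable.stronglyMeasurableAtFilter hcont.continuousAt).const_add _

local notation "φ" => gaussianPDFReal 0 1

lemma gaussianPDFReal_zero_one (x : ℝ) : φ x = exp (-x ^ 2 / 2) / √(2 * π) := by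
  simp [gaussianPDFReal, div_eq_inv_mul]

lemma gaussianPDFReal_zero_one_neg (x : ℝ) : φ (-x) = φ x := by
  simp [gaussianPDFReal_zero_one]

lemma sq_gaussianPDFReal_zero_one (x : ℝ) : φ x ^ 2 = φ (√2 * x) / √(2 * π) := by
  have h2 : √2 ^ 2 = 2 := sq_sqrt zero_le_two
  simp only [gaussianPDFReal_zero_one, div_pow, mul_pow, h2, ← exp_nat_mul]
  field_simp
  ring_nf

lemma hasDerivAt_gaussianPDFReal_zero_one (x : ℝ) : HasDerivAt φ (-x * φ x) x := by
  rw [funext gaussianPDFReal_zero_one]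
  exact ((((hasDerivAt_pow 2 x).neg).div_const 2).exp.div_const _).congr_deriv
    (by simp only [Pi.neg_apply]; ring)

lemma tendsto_gaussianPDFReal_zero_one : Tendsto φ (cocompact ℝ) (𝓝 0) := by
  have h := (tendsto_rpow_abs_mul_exp_neg_mul_sq_cocompact (a := 1 / 2) (by norm_num) 0).div_const
    √(2 * π)
  rw [zero_div] at h
  refine h.congr fun x ↦ ?_
  rw [gaussianPDFReal_zero_one]
  simp only [rpow_zero, one_mul]
  ring_nf

lemma normalCDF_eq_setIntegral (x : ℝ) : normalCDF x = ∫ t in Iic x, φ t := by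
  simp only [normalCDF, gaussianPDFReal_zero_one]

lemma normalCDF_eq_cdf (x : ℝ) : normalCDF x = cdf (gaussianReal 0 1) x := by
  rw [cdf_eq_real, measureReal_def, gaussianReal_apply_eq_integral _ one_ne_zero,
    ENNReal.toReal_ofReal (setIntegral_nonneg measurableSet_Iic
      fun t _ ↦ gaussianPDFReal_nonneg 0 1 t), normalCDF_eq_setIntegral]

lemma normalCDF_nonneg (x : ℝ) : 0 ≤ normalCDF x :=
  normalCDF_eq_cdf x ▸ cdf_nonneg _ x

lemma normalCDF_le_one (x : ℝ) : normalCDF x ≤ 1 :=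
  normalCDF_eq_cdf x ▸ cdf_le_one _ x

lemma tendsto_normalCDF_atTop : Tendsto normalCDF atTop (𝓝 1) :=
  funext normalCDF_eq_cdf ▸ tendsto_cdf_atTop _

lemma tendsto_normalCDF_atBot : Tendsto normalCDF atBot (𝓝 0) :=
  funext normalCDF_eq_cdf ▸ tendsto_cdf_atBot _

lemma one_sub_normalCDF (x : ℝ) : 1 - normalCDF x = ∫ t in Ioi x, φ t := by
  rw [← integral_gaussianPDFReal_eq_one 0 one_ne_zero, normalCDF_eq_setIntegral,
    ← intervalIntegral.integral_Iic_add_Ioi (integrable_gaussianPDFReal 0 1).integrableOn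
      (integrable_gaussianPDFReal 0 1).integrableOn]
  ring

lemma normalCDF_neg (x : ℝ) : normalCDF (-x) = 1 - normalCDF x := by
  rw [one_sub_normalCDF, normalCDF_eq_setIntegral, ← integral_comp_neg_Ioi]
  simp only [gaussianPDFReal_zero_one_neg]

lemma hasDerivAt_normalCDF (x : ℝ) : HasDerivAt normalCDF (φ x) x := by
  rw [funext normalCDF_eq_setIntegral]
  exact hasDerivAt_setIntegral_Iic (integrable_gaussianPDFReal 0 1)
    (continuous_iff_continuousAt.2 fun t ↦ (hasDerivAt_gaussianPDFReal_zero_one t).continuousAt) x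

lemma mul_one_sub_normalCDF_le {x : ℝ} (hx : 0 ≤ x) : x * (1 - normalCDF x) ≤ φ x := by
  have hderiv : ∀ t ∈ Ici x, HasDerivAt (-φ) (t * φ t) t := fun t _ ↦ by
    simpa using (hasDerivAt_gaussianPDFReal_zero_one t).neg
  have hnonneg : ∀ t ∈ Ioi x, 0 ≤ t * φ t := fun t ht ↦
    mul_nonneg (hx.trans ht.out.le) (gaussianPDFReal_nonneg 0 1 t)
  have hlim : Tendsto (-φ) atTop (𝓝 (-0)) :=
    (tendsto_gaussianPDFReal_zero_one.mono_left atTop_le_cocompact).neg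
  calc x * (1 - normalCDF x) = ∫ t in Ioi x, x * φ t := by
        rw [one_sub_normalCDF, integral_const_mul]
    _ ≤ ∫ t in Ioi x, t * φ t :=
        setIntegral_mono_on ((integrable_gaussianPDFReal 0 1).const_mul x).integrableOn
          (integrableOn_Ioi_deriv_of_nonneg' hderiv hnonneg hlim) measurableSet_Ioi
          fun t ht ↦ mul_le_mul_of_nonneg_right ht.out.le (gaussianPDFReal_nonneg 0 1 t)
    _ = φ x := by
        rw [integral_Ioi_of_hasDerivAt_of_nonneg' hderiv hnonneg hlim]
        simp

lemma tendsto_mul_normalCDF_mul_one_sub_atTop :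
    Tendsto (fun x ↦ x * normalCDF x * (1 - normalCDF x)) atTop (𝓝 0) := by
  refine squeeze_zero' ?_ ?_ (tendsto_gaussianPDFReal_zero_one.mono_left atTop_le_cocompact)
  · filter_upwards [eventually_ge_atTop 0] with x hx
    exact mul_nonneg (mul_nonneg hx (normalCDF_nonneg x)) (sub_nonneg.2 (normalCDF_le_one x))
  · filter_upwards [eventually_ge_atTop 0] with x hx
    calc x * normalCDF x * (1 - normalCDF x) ≤ x * (1 - normalCDF x) := by
          rw [mul_right_comm]
          exact mul_le_of_le_one_right (mul_nonneg hx (sub_nonneg.2 (normalCDF_le_one x)))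
            (normalCDF_le_one x)
    _ ≤ φ x := mul_one_sub_normalCDF_le hx

lemma tendsto_mul_normalCDF_mul_one_sub_atBot :
    Tendsto (fun x ↦ x * normalCDF x * (1 - normalCDF x)) atBot (𝓝 0) := by
  have h := (tendsto_mul_normalCDF_mul_one_sub_atTop.comp tendsto_neg_atBot_atTop).neg
  rw [neg_zero] at h
  refine h.congr fun x ↦ ?_
  simp only [Function.comp_apply, normalCDF_neg]
  ring

noncomputable def normalRangePrimitive (x : ℝ) : ℝ :=
  2 * x * normalCDF x * (1 - normalCDF x) + 2 * φ x * (1 - 2 * normalCDF x)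
    + 2 / √π * normalCDF (√2 * x)

lemma hasDerivAt_normalRangePrimitive (x : ℝ) :
    HasDerivAt normalRangePrimitive (1 - normalCDF x ^ 2 - (1 - normalCDF x) ^ 2) x := by
  have hF := hasDerivAt_normalCDF x
  have hφ := hasDerivAt_gaussianPDFReal_zero_one x
  have hF₂ := (hasDerivAt_normalCDF (√2 * x)).comp x ((hasDerivAt_id x).const_mul √2)
  have := ((((hasDerivAt_id x).const_mul 2).mul hF).mul (hF.const_sub 1) |>.add
    ((hφ.const_mul 2).mul ((hF.const_mul 2).const_sub 1))).add (hF₂.const_mul (2 / √π))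
  refine this.congr_deriv ?_
  have hsq := sq_gaussianPDFReal_zero_one x
  have hπ : √(2 * π) = √2 * √π := sqrt_mul zero_le_two π
  have h2 : √2 ^ 2 = 2 := sq_sqrt zero_le_two
  rw [hπ] at hsq
  field_simp at hsq ⊢
  rw [← hsq]
  simp only [Pi.mul_apply, id]
  linear_combination (2 * √π * φ x ^ 2) * h2

lemma tendsto_normalRangePrimitive_atTop :
    Tendsto normalRangePrimitive atTop (𝓝 (2 / √π)) := by
  have hF := tendsto_normalCDF_atTop
  have := ((tendsto_mul_normalCDF_mul_one_sub_atTop.const_mul 2).add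
    (((tendsto_gaussianPDFReal_zero_one.mono_left atTop_le_cocompact).const_mul 2).mul
      ((hF.const_mul 2).const_sub 1))).add
    ((hF.comp (tendsto_id.const_mul_atTop (sqrt_pos.2 zero_lt_two))).const_mul (2 / √π))
  convert this using 2
  · simp only [normalRangePrimitive, Function.comp_apply, id]; ring
  · norm_num

lemma tendsto_normalRangePrimitive_atBot : Tendsto normalRangePrimitive atBot (𝓝 0) := by
  have hF := tendsto_normalCDF_atBot
  have := ((tendsto_mul_normalCDF_mul_one_sub_atBot.const_mul 2).add
    (((tendsto_gaussianPDFReal_zero_one.mono_left atBot_le_cocompact).const_mul 2).mul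
      ((hF.const_mul 2).const_sub 1))).add
    ((hF.comp (tendsto_id.const_mul_atBot (sqrt_pos.2 zero_lt_two))).const_mul (2 / √π))
  convert this using 2
  · simp only [normalRangePrimitive, Function.comp_apply, id]; ring
  · norm_num

/-- `∫ 1 - F(x)² - (1-F(x))² dx = 2/√π`. -/
theorem stmt1 :
    ∫ x : ℝ, (1 - (normalCDF x)^2 - (1 - normalCDF x)^2) = 2 / Real.sqrt π := by
  have hnonneg (x : ℝ) : 0 ≤ 1 - normalCDF x ^ 2 - (1 - normalCDF x) ^ 2 := by
    nlinarith [normalCDF_nonneg x, normalCDF_le_one x]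
  rw [integral_of_hasDerivAt_of_tendsto hasDerivAt_normalRangePrimitive
    (integrable_deriv_of_nonneg hasDerivAt_normalRangePrimitive hnonneg
      tendsto_normalRangePrimitive_atBot tendsto_normalRangePrimitive_atTop)
    tendsto_normalRangePrimitive_atBot tendsto_normalRangePrimitive_atTop, sub_zero]
end

section
/- The mean squared width of an equilateral triangle with unit side in ℝ² equals (1/2)(1 + 3√3/(2π)), where the width w(u) is taken in a direction u uniform on the unit circle. -/
/-!
With `u = (cos θ, sin θ)`, the measure `volume.toSphere` on `S¹` is `dθ` on `(-π, π)`: the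
generalized polar decomposition behind `toSphere` and planar polar coordinates both split
`∫ f (x / ‖x‖) g ‖x‖ dx` into an angular integral times the same radial factor `∫₀^∞ r g r dr`.

The width of a triangle in direction `u` is the largest `|⟪e, u⟫|` over its edges `e`. If one edge
of the unit equilateral triangle has angle `α`, the edges have angles `α, α + π/3, α + 2π/3`
modulo `π`, so the width at `θ` is `W (θ - α)` with `W t = max |cos t| |cos (t ∓ π/3)|`.
`W` has period `π/3` and equals `cos` on `[-π/6, π/6]`, hence
`∫_{-π}^{π} W² = 6 ∫_{-π/6}^{π/6} cos² = π + 3√3/2`, to be divided by `2π`.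
-/

open Real MeasureTheory Set Metric
open scoped RealInnerProductSpace

namespace MeasureTheory.Measure

theorem integral_volumeIoiPow (n : ℕ) (g : ℝ → ℝ) :
    ∫ r, g r ∂volumeIoiPow n = ∫ r in Ioi 0, r ^ n * g r := by
  simp only [volumeIoiPow, ENNReal.ofReal]
  rw [integral_withDensity_eq_integral_smul,
    integral_subtype_comap measurableSet_Ioi fun r ↦ Real.toNNReal (r ^ n) • g r,
    setIntegral_congr_fun measurableSet_Ioi fun r hr ↦ ?_]
  · rw [NNReal.smul_def, Real.coe_toNNReal _ (pow_nonneg hr.out.le _), smul_eq_mul]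
  · exact (measurable_subtype_coe.pow_const _).real_toNNReal

variable {E : Type*} [NormedAddCommGroup E] [NormedSpace ℝ E] [MeasurableSpace E] [BorelSpace E]
  [FiniteDimensional ℝ E] [Nontrivial E] (μ : Measure E) [μ.IsAddHaarMeasure]

theorem integral_mul_norm_eq_integral_toSphere_mul (f : E → ℝ) (g : ℝ → ℝ) :
    ∫ x, f (‖x‖⁻¹ • x) * g ‖x‖ ∂μ
      = (∫ u, f u ∂μ.toSphere) * ∫ r in Ioi 0, r ^ (Module.finrank ℝ E - 1) * g r := by
  calc ∫ x, f (‖x‖⁻¹ • x) * g ‖x‖ ∂μ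
      = ∫ x : ({0}ᶜ : Set E), f (‖x.1‖⁻¹ • x.1) * g ‖x.1‖ ∂(μ.comap (↑)) := by
        rw [integral_subtype_comap (measurableSet_singleton _).compl
          fun x ↦ f (‖x‖⁻¹ • x) * g ‖x‖, restrict_compl_singleton]
    _ = ∫ q, f q.1 * g q.2 ∂μ.toSphere.prod (volumeIoiPow (Module.finrank ℝ E - 1)) := by
        simpa using μ.measurePreserving_homeomorphUnitSphereProd.integral_comp
          (Homeomorph.measurableEmbedding _) (fun q ↦ f q.1 * g q.2)
    _ = _ := by
        rw [integral_prod_mul (fun u : sphere (0 : E) 1 ↦ f u) (fun r : Ioi (0 : ℝ) ↦ g r),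
          integral_volumeIoiPow]

end MeasureTheory.Measure

noncomputable def angleVec (θ : ℝ) : EuclideanSpace ℝ (Fin 2) := !₂[cos θ, sin θ]

theorem norm_angleVec (θ : ℝ) : ‖angleVec θ‖ = 1 := by
  simp [angleVec, EuclideanSpace.norm_eq, Fin.sum_univ_two]

theorem inner_angleVec_angleVec (α θ : ℝ) : ⟪angleVec α, angleVec θ⟫ = cos (θ - α) := by
  simp [angleVec, PiLp.inner_apply, Fin.sum_univ_two, cos_sub]

theorem exists_eq_angleVec {x : EuclideanSpace ℝ (Fin 2)} (hx : ‖x‖ = 1) :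
    ∃ α, x = angleVec α := by
  set z := Complex.orthonormalBasisOneI.repr.symm x
  have hz : ‖z‖ = 1 := by rw [LinearIsometryEquiv.norm_map, hx]
  have hz0 : z ≠ 0 := norm_ne_zero_iff.1 (by simp [hz])
  have hre : z.re = x 0 := by simp [z]
  have him : z.im = x 1 := by simp [z]
  refine ⟨Complex.arg z, ?_⟩
  ext i; fin_cases i <;> simp [angleVec, Complex.cos_arg hz0, Complex.sin_arg, hz, hre, him]

theorem integral_mul_norm_eq_integral_angleVec_mul (f : EuclideanSpace ℝ (Fin 2) → ℝ)
    (g : ℝ → ℝ) :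
    ∫ x, f (‖x‖⁻¹ • x) * g ‖x‖
      = (∫ θ in -π..π, f (angleVec θ)) * ∫ r in Ioi 0, r * g r := by
  let e : ℝ × ℝ ≃ᵐ EuclideanSpace ℝ (Fin 2) :=
    MeasurableEquiv.finTwoArrow.symm.trans (MeasurableEquiv.toLp 2 (Fin 2 → ℝ))
  have he : MeasurePreserving e :=
    (EuclideanSpace.volume_preserving_symm_measurableEquiv_toLp (Fin 2)).symm.comp
      (volume_preserving_finTwoArrow ℝ).symm
  have he_polar (p : ℝ × ℝ) : e (polarCoord.symm p) = p.1 • angleVec p.2 := by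
    ext i; fin_cases i <;> rfl
  calc ∫ x, f (‖x‖⁻¹ • x) * g ‖x‖
      = ∫ q, f (‖e q‖⁻¹ • e q) * g ‖e q‖ :=
        (he.integral_comp e.measurableEmbedding fun x ↦ f (‖x‖⁻¹ • x) * g ‖x‖).symm
    _ = ∫ p in polarCoord.target, p.1 • (f (‖e (polarCoord.symm p)‖⁻¹ • e (polarCoord.symm p))
          * g ‖e (polarCoord.symm p)‖) :=
        (integral_comp_polarCoord_symm fun q ↦ f (‖e q‖⁻¹ • e q) * g ‖e q‖).symm
    _ = ∫ p in Ioi 0 ×ˢ Ioo (-π) π, (p.1 * g p.1) * f (angleVec p.2) := by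
        refine setIntegral_congr_fun polarCoord.open_target.measurableSet fun p hp ↦ ?_
        have hr : 0 < p.1 := hp.1
        rw [he_polar, norm_smul, norm_angleVec, Real.norm_of_nonneg hr.le, mul_one,
          inv_smul_smul₀ hr.ne', smul_eq_mul]
        ring
    _ = (∫ θ in -π..π, f (angleVec θ)) * ∫ r in Ioi 0, r * g r := by
        rw [Measure.volume_eq_prod,
          setIntegral_prod_mul (fun r ↦ r * g r) (fun θ ↦ f (angleVec θ)), mul_comm,
          intervalIntegral.integral_of_le (by linarith [pi_pos]), integral_Ioc_eq_integral_Ioo]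

theorem integral_toSphere_eq_integral_angleVec (f : EuclideanSpace ℝ (Fin 2) → ℝ) :
    ∫ u, f u ∂(volume : Measure (EuclideanSpace ℝ (Fin 2))).toSphere
      = ∫ θ in -π..π, f (angleVec θ) := by
  -- any radial weight with `∫₀^∞ r g r dr ≠ 0` would do
  have hradial : ∫ r in Ioi 0, r * exp (-r) = 1 := by
    rw [← Gamma_two, Gamma_eq_integral two_pos]
    refine setIntegral_congr_fun measurableSet_Ioi fun r _ ↦ ?_
    norm_num [mul_comm]
  have h := (volume.integral_mul_norm_eq_integral_toSphere_mul f fun r ↦ exp (-r)).symm.trans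
    (integral_mul_norm_eq_integral_angleVec_mul f fun r ↦ exp (-r))
  simpa [hradial] using h

theorem toReal_toSphere_univ_fin_two :
    ((volume : Measure (EuclideanSpace ℝ (Fin 2))).toSphere univ).toReal = 2 * π := by
  have h := integral_toSphere_eq_integral_angleVec fun _ ↦ 1
  rw [integral_const, intervalIntegral.integral_const, smul_eq_mul, smul_eq_mul, mul_one,
    mul_one] at h
  rw [← measureReal_def, h]
  ring

section ConvexHull

variable {E : Type*} [AddCommGroup E] [Module ℝ E] {f : E → ℝ}

theorem ConvexOn.csSup_image_convexHull (hf : ConvexOn ℝ univ f) (s : Set E) :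
    sSup (f '' convexHull ℝ s) = sSup (f '' s) := by
  refine csSup_eq_csSup_of_forall_exists_le ?_ ?_
  · rintro _ ⟨x, hx, rfl⟩
    obtain ⟨y, hy, hxy⟩ := hf.exists_ge_of_mem_convexHull (subset_univ s) hx
    exact ⟨f y, mem_image_of_mem f hy, hxy⟩
  · rintro _ ⟨x, hx, rfl⟩
    exact ⟨f x, mem_image_of_mem f (subset_convexHull ℝ s hx), le_rfl⟩

theorem ConcaveOn.csInf_image_convexHull (hf : ConcaveOn ℝ univ f) (s : Set E) :
    sInf (f '' convexHull ℝ s) = sInf (f '' s) := by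
  refine csInf_eq_csInf_of_forall_exists_le ?_ ?_
  · rintro _ ⟨x, hx, rfl⟩
    obtain ⟨y, hy, hxy⟩ := hf.exists_le_of_mem_convexHull (subset_univ s) hx
    exact ⟨f y, mem_image_of_mem f hy, hxy⟩
  · rintro _ ⟨x, hx, rfl⟩
    exact ⟨f x, mem_image_of_mem f (subset_convexHull ℝ s hx), le_rfl⟩

end ConvexHull

theorem max_sub_min_three (a b c : ℝ) :
    max a (max b c) - min a (min b c) = max |b - a| (max |c - a| |c - b|) := by
  grind

section Width

variable {E : Type*} [NormedAddCommGroup E] [InnerProductSpace ℝ E]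

noncomputable def width (C : Set E) (u : E) : ℝ :=
  sSup ((fun x ↦ ⟪x, u⟫) '' C) - sInf ((fun x ↦ ⟪x, u⟫) '' C)

theorem width_convexHull_range_fin_three (p : Fin 3 → E) (u : E) :
    width (convexHull ℝ (range p)) u
      = max |⟪p 1 - p 0, u⟫| (max |⟪p 2 - p 0, u⟫| |⟪p 2 - p 1, u⟫|) := by
  have hrange : (fun x ↦ ⟪x, u⟫) '' range p = {⟪p 0, u⟫, ⟪p 1, u⟫, ⟪p 2, u⟫} := by
    rw [← range_comp]; ext; simp [Fin.exists_fin_succ, eq_comm]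
  have hconvex : ConvexOn ℝ univ fun x : E ↦ ⟪x, u⟫ := ((innerₗ E).flip u).convexOn convex_univ
  have hconcave : ConcaveOn ℝ univ fun x : E ↦ ⟪x, u⟫ :=
    ((innerₗ E).flip u).concaveOn convex_univ
  rw [width, hconvex.csSup_image_convexHull, hconcave.csInf_image_convexHull, hrange,
    csSup_insert (Set.toFinite _).bddAbove (insert_nonempty _ _), csSup_pair,
    csInf_insert (Set.toFinite _).bddBelow (insert_nonempty _ _), csInf_pair]
  simp only [inner_sub_left]
  exact max_sub_min_three _ _ _

end Width

noncomputable def equilateralWidth (t : ℝ) : ℝ :=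
  max |cos t| (max |cos (t - π / 3)| |cos (t + π / 3)|)

theorem continuous_equilateralWidth : Continuous equilateralWidth := by
  unfold equilateralWidth; fun_prop

theorem equilateralWidth_periodic : Function.Periodic equilateralWidth (π / 3) := by
  intro t
  have h : |cos (t + π / 3 + π / 3)| = |cos (t - π / 3)| := by
    rw [show t + π / 3 + π / 3 = t - π / 3 + π by ring, cos_add_pi, abs_neg]
  simp only [equilateralWidth, add_sub_cancel_right, h]
  rw [max_left_comm, max_comm |cos (t - π / 3)|]

theorem equilateralWidth_eq_cos {t : ℝ} (ht : t ∈ Icc (-(π / 6)) (π / 6)) :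
    equilateralWidth t = cos t := by
  have hcos : 0 ≤ cos t :=
    cos_nonneg_of_mem_Icc ⟨by linarith [ht.1, pi_pos], by linarith [ht.2, pi_pos]⟩
  have h₁ : 0 ≤ sin (π / 6 - t) :=
    sin_nonneg_of_nonneg_of_le_pi (by linarith [ht.2]) (by linarith [ht.1, pi_pos])
  have h₂ : 0 ≤ sin (π / 6 + t) :=
    sin_nonneg_of_nonneg_of_le_pi (by linarith [ht.1]) (by linarith [ht.2, pi_pos])
  rw [sin_sub, cos_pi_div_six, sin_pi_div_six] at h₁
  rw [sin_add, cos_pi_div_six, sin_pi_div_six] at h₂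
  rw [equilateralWidth, abs_of_nonneg hcos, cos_sub, cos_add, cos_pi_div_three, sin_pi_div_three]
  refine max_eq_left (max_le ?_ ?_) <;> rw [abs_le] <;> constructor <;> nlinarith

theorem integral_equilateralWidth_sq (a : ℝ) :
    ∫ t in a..a + 2 * π, equilateralWidth t ^ 2 = π + 3 * √3 / 2 := by
  have hper : Function.Periodic (fun t ↦ equilateralWidth t ^ 2) (π / 3) := fun t ↦ by
    simp only [equilateralWidth_periodic t]
  have hint : ∀ t₁ t₂, IntervalIntegrable (fun t ↦ equilateralWidth t ^ 2) volume t₁ t₂ :=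
    fun _ _ ↦ (continuous_equilateralWidth.pow 2).intervalIntegrable _ _
  have hcos : ∫ t in -(π / 6)..-(π / 6) + π / 3, equilateralWidth t ^ 2
      = ∫ t in -(π / 6)..π / 6, cos t ^ 2 := by
    rw [show -(π / 6) + π / 3 = π / 6 by ring]
    refine intervalIntegral.integral_congr fun t ht ↦ ?_
    rw [uIcc_of_le (by linarith [pi_pos])] at ht
    simp only [equilateralWidth_eq_cos ht]
  rw [show 2 * π = (6 : ℤ) • (π / 3) by ring, hper.intervalIntegral_add_zsmul_eq 6 a hint,
    hper.intervalIntegral_add_eq a (-(π / 6)), hcos, integral_cos_sq]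
  simp only [cos_neg, sin_neg, cos_pi_div_six, sin_pi_div_six]
  ring

theorem max_abs_inner_angleVec_eq_equilateralWidth {α β : ℝ} (h : cos (β - α) = 1 / 2)
    (θ : ℝ) :
    max |⟪angleVec α, angleVec θ⟫|
        (max |⟪angleVec β, angleVec θ⟫| |⟪angleVec β - angleVec α, angleVec θ⟫|)
      = equilateralWidth (θ - α) := by
  have hsub (t : ℝ) : cos (t - π / 3) - cos t = -cos (t + π / 3) := by
    rw [cos_sub, cos_add, cos_pi_div_three]; ring
  have hadd (t : ℝ) : cos (t + π / 3) - cos t = -cos (t - π / 3) := by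
    rw [cos_sub, cos_add, cos_pi_div_three]; ring
  obtain ⟨k, hk | hk⟩ := cos_eq_cos_iff.1 (cos_pi_div_three.trans h.symm)
  · have hβ : θ - β = θ - α - π / 3 - k * (2 * π) := by linarith
    rw [inner_sub_left, inner_angleVec_angleVec, inner_angleVec_angleVec, hβ,
      cos_sub_int_mul_two_pi, hsub, abs_neg, equilateralWidth]
  · have hβ : θ - β = θ - α + π / 3 - k * (2 * π) := by linarith
    rw [inner_sub_left, inner_angleVec_angleVec, inner_angleVec_angleVec, hβ,
      cos_sub_int_mul_two_pi, hadd, abs_neg, equilateralWidth, max_comm |cos (θ - α + π / 3)|]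

/-- The mean squared width of an equilateral triangle with unit side length in `ℝ²` is `(1/2)(1 + 3√3/(2π))`. -/
theorem stmt12 (p : Fin 3 → EuclideanSpace ℝ (Fin 2))
    (hp : ∀ i j, i ≠ j → dist (p i) (p j) = 1)
    (C : Set (EuclideanSpace ℝ (Fin 2))) (hC : C = convexHull ℝ (Set.range p))
    (μ : Measure (Metric.sphere (0 : EuclideanSpace ℝ (Fin 2)) 1))
    (hμ : μ = (volume : Measure (EuclideanSpace ℝ (Fin 2))).toSphere) :
    (∫ u : Metric.sphere (0 : EuclideanSpace ℝ (Fin 2)) 1,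
        (sSup ((fun x => ⟪x, (u : EuclideanSpace ℝ (Fin 2))⟫) '' C)
          - sInf ((fun x => ⟪x, (u : EuclideanSpace ℝ (Fin 2))⟫) '' C))^2 ∂μ)
        / (μ Set.univ).toReal
      = (1/2) * (1 + 3 * Real.sqrt 3 / (2*π)) := by
  subst hC hμ
  have hnorm (i j : Fin 3) (hij : i ≠ j) : ‖p i - p j‖ = 1 := by rw [← dist_eq_norm, hp i j hij]
  obtain ⟨α, hα⟩ := exists_eq_angleVec (hnorm 1 0 (by decide))
  obtain ⟨β, hβ⟩ := exists_eq_angleVec (hnorm 2 0 (by decide))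
  have hαβ : cos (β - α) = 1 / 2 := by
    rw [← inner_angleVec_angleVec, ← hα, ← hβ,
      real_inner_eq_norm_mul_self_add_norm_mul_self_sub_norm_sub_mul_self_div_two,
      sub_sub_sub_cancel_right, hnorm 1 0 (by decide), hnorm 2 0 (by decide),
      hnorm 1 2 (by decide)]
    norm_num
  have hwidth (θ : ℝ) :
      width (convexHull ℝ (range p)) (angleVec θ) ^ 2 = equilateralWidth (θ - α) ^ 2 := by
    rw [width_convexHull_range_fin_three, ← sub_sub_sub_cancel_right (p 2) (p 1) (p 0), hα, hβ,
      max_abs_inner_angleVec_eq_equilateralWidth hαβ]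
  change (∫ u : sphere (0 : EuclideanSpace ℝ (Fin 2)) 1,
    width (convexHull ℝ (range p)) (u : EuclideanSpace ℝ (Fin 2)) ^ 2 ∂_) / _ = _
  rw [integral_toSphere_eq_integral_angleVec fun u ↦ width (convexHull ℝ (range p)) u ^ 2,
    toReal_toSphere_univ_fin_two, intervalIntegral.integral_congr fun θ _ ↦ hwidth θ,
    intervalIntegral.integral_comp_sub_right (fun t ↦ equilateralWidth t ^ 2),
    show π - α = -π - α + 2 * π by ring, integral_equilateralWidth_sq]
  field_simp
end

section
/- The mean squared width of the unit n-cube [0,1]ⁿ equals 1 + 2(n-1)/π; i.e. for u uniform on S^{n-1}, E((Σᵢ|uᵢ|)²) = 1 + 2(n-1)/π. -/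
/-!
In polar coordinates, integrating a `p`-homogeneous function `g` against `exp (-‖x‖²)` gives
`(∫_S g) · Γ((n + p)/2) / 2`, while for `g x = ∏_{k ∈ s} |x k|` Fubini evaluates the same
Gaussian integral as `√π ^ (n - #s)`. Taking `s = ∅` gives the area of the sphere, and
`s = {i, j}` gives `∫_S |u i| |u j| = 2/(nπ) · |S|` for `i ≠ j`. On the sphere
`(∑ |u i|)² = 1 + ∑_{i ≠ j} |u i| |u j|`, so the mean is `1 + n(n-1) · 2/(nπ)`.
-/

open Real MeasureTheory Set Metric

lemma integral_Ioi_pow_mul_exp_neg_sq (k : ℕ) :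
    ∫ r in Ioi (0 : ℝ), r ^ k * exp (-r ^ 2) = Gamma ((k + 1) / 2) / 2 := by
  have h := integral_rpow_mul_exp_neg_rpow two_pos (neg_one_lt_zero.trans_le k.cast_nonneg)
  simp only [rpow_natCast, rpow_ofNat] at h
  rw [h]
  ring

lemma integral_abs_mul_exp_neg_sq : ∫ t : ℝ, |t| * exp (-t ^ 2) = 1 := by
  have h := integral_comp_abs (f := fun t : ℝ ↦ t * exp (-t ^ 2))
  have h1 := integral_Ioi_pow_mul_exp_neg_sq 1
  simp only [sq_abs, pow_one] at h h1
  rw [h, h1]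
  norm_num

lemma integral_exp_neg_sq : ∫ t : ℝ, exp (-t ^ 2) = √π := by
  simpa using integral_gaussian 1

section Polar

variable {E : Type*} [NormedAddCommGroup E] [NormedSpace ℝ E] [MeasurableSpace E]
  [BorelSpace E] [FiniteDimensional ℝ E] [Nontrivial E] (μ : Measure E) [μ.IsAddHaarMeasure]

lemma integral_comp_smul_norm_mul_fun_norm_addHaar (g : E → ℝ) (f : ℝ → ℝ) :
    ∫ x, g (‖x‖⁻¹ • x) * f ‖x‖ ∂μ
      = (∫ u : sphere (0 : E) 1, g u ∂μ.toSphere)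
        * ∫ r in Ioi (0 : ℝ), r ^ (Module.finrank ℝ E - 1) * f r := by
  calc ∫ x, g (‖x‖⁻¹ • x) * f ‖x‖ ∂μ
      = ∫ x : ({0}ᶜ : Set E), g (‖(x : E)‖⁻¹ • (x : E)) * f ‖(x : E)‖ ∂(μ.comap (↑)) := by
        rw [integral_subtype_comap (measurableSet_singleton _).compl
          fun x : E ↦ g (‖x‖⁻¹ • x) * f ‖x‖, restrict_compl_singleton]
    _ = ∫ p : sphere (0 : E) 1 × Ioi (0 : ℝ), g p.1 * f p.2
          ∂(μ.toSphere.prod (.volumeIoiPow (Module.finrank ℝ E - 1))) := by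
        rw [← μ.measurePreserving_homeomorphUnitSphereProd.integral_comp
          (Homeomorph.measurableEmbedding _) fun p ↦ g (p.1 : E) * f (p.2 : ℝ)]
        simp
    _ = (∫ u : sphere (0 : E) 1, g u ∂μ.toSphere)
          * ∫ r : Ioi (0 : ℝ), f r ∂(.volumeIoiPow (Module.finrank ℝ E - 1)) :=
        integral_prod_mul (fun u : sphere (0 : E) 1 ↦ g u) (fun r : Ioi (0 : ℝ) ↦ f r)
    _ = _ := by
        simp only [Measure.volumeIoiPow, ENNReal.ofReal]
        rw [integral_withDensity_eq_integral_smul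
            (measurable_subtype_coe.pow_const _).real_toNNReal,
          integral_subtype_comap measurableSet_Ioi fun r ↦ (r ^ _).toNNReal • f r]
        refine congrArg _ (setIntegral_congr_fun measurableSet_Ioi fun r hr ↦ ?_)
        rw [NNReal.smul_def, coe_toNNReal _ (pow_nonneg hr.out.le _), smul_eq_mul]

lemma integral_mul_exp_neg_norm_sq_of_homogeneous {g : E → ℝ} {p : ℕ}
    (hg : ∀ (c : ℝ) (x : E), 0 ≤ c → g (c • x) = c ^ p * g x) :
    ∫ x, g x * exp (-‖x‖ ^ 2) ∂μ
      = (∫ u : sphere (0 : E) 1, g u ∂μ.toSphere)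
        * (Gamma ((Module.finrank ℝ E + p) / 2) / 2) := by
  have hpolar (x : E) : g x = g (‖x‖⁻¹ • x) * ‖x‖ ^ p := by
    rcases eq_or_ne x 0 with rfl | hx
    · simpa [mul_comm] using hg 0 0 le_rfl
    · conv_lhs => rw [← smul_inv_smul₀ (norm_ne_zero_iff.2 hx) x]
      rw [hg _ _ (norm_nonneg x), mul_comm]
  have hdim : 1 ≤ Module.finrank ℝ E := Module.finrank_pos
  calc ∫ x, g x * exp (-‖x‖ ^ 2) ∂μ
      = ∫ x, g (‖x‖⁻¹ • x) * (‖x‖ ^ p * exp (-‖x‖ ^ 2)) ∂μ := by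
        simp_rw [← mul_assoc, ← hpolar]
    _ = _ := by
        rw [integral_comp_smul_norm_mul_fun_norm_addHaar μ g (fun r ↦ r ^ p * exp (-r ^ 2))]
        simp_rw [← mul_assoc, ← pow_add]
        rw [integral_Ioi_pow_mul_exp_neg_sq, Nat.cast_add, Nat.cast_sub hdim]
        ring_nf

end Polar

namespace EuclideanSpace

variable {ι : Type*} [Fintype ι]

lemma integral_prod_abs_mul_exp_neg_norm_sq (s : Finset ι) :
    ∫ x : EuclideanSpace ℝ ι, (∏ k ∈ s, |x k|) * exp (-‖x‖ ^ 2)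
      = √π ^ (Fintype.card ι - s.card) := by
  classical
  have hfactor (x : ι → ℝ) : (∏ k ∈ s, |x k|) * exp (-∑ k, x k ^ 2)
      = ∏ k, (if k ∈ s then |x k| else 1) * exp (-x k ^ 2) := by
    rw [Finset.prod_mul_distrib, Finset.prod_ite_mem, Finset.univ_inter,
      ← Finset.sum_neg_distrib, exp_sum]
  have hfactor_integral (k : ι) : ∫ t : ℝ, (if k ∈ s then |t| else 1) * exp (-t ^ 2)
      = if k ∈ s then 1 else √π := by
    split_ifs
    · exact integral_abs_mul_exp_neg_sq
    · simpa using integral_exp_neg_sq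
  calc ∫ x : EuclideanSpace ℝ ι, (∏ k ∈ s, |x k|) * exp (-‖x‖ ^ 2)
      = ∫ x : ι → ℝ, (∏ k ∈ s, |x k|) * exp (-∑ k, x k ^ 2) := by
        rw [← (volume_preserving_symm_measurableEquiv_toLp ι).integral_comp']
        simp [norm_sq_eq]
    _ = ∏ k, ∫ t : ℝ, (if k ∈ s then |t| else 1) * exp (-t ^ 2) := by
        simp_rw [hfactor]
        exact integral_fintype_prod_volume_eq_prod
          fun k t ↦ (if k ∈ s then |t| else 1) * exp (-t ^ 2)
    _ = √π ^ (Fintype.card ι - s.card) := by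
        simp_rw [hfactor_integral]
        rw [Finset.prod_ite, Finset.prod_const_one, one_mul, Finset.prod_const,
          Finset.filter_not, Finset.filter_mem_eq_inter, Finset.univ_inter,
          ← Finset.compl_eq_univ_sdiff, Finset.card_compl]

lemma toSphere_real_univ_mul_Gamma [Nonempty ι] :
    (volume : Measure (EuclideanSpace ℝ ι)).toSphere.real univ
        * (Gamma (Fintype.card ι / 2) / 2) = √π ^ Fintype.card ι := by
  have h := integral_mul_exp_neg_norm_sq_of_homogeneous (volume : Measure (EuclideanSpace ℝ ι))
    (g := fun _ ↦ 1) (p := 0) (by simp)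
  have h0 := integral_prod_abs_mul_exp_neg_norm_sq (ι := ι) ∅
  simp only [Finset.prod_empty, one_mul, Finset.card_empty, tsub_zero] at h h0
  rw [← h0, h, integral_const, smul_eq_mul, mul_one, finrank_euclideanSpace, Nat.cast_zero,
    add_zero]

lemma integral_sphere_abs_mul_abs {i j : ι} (hij : i ≠ j) :
    ∫ u : sphere (0 : EuclideanSpace ℝ ι) 1,
        |(u : EuclideanSpace ℝ ι) i| * |(u : EuclideanSpace ℝ ι) j|
        ∂(volume : Measure (EuclideanSpace ℝ ι)).toSphere
      = 2 / (Fintype.card ι * π) * (volume : Measure (EuclideanSpace ℝ ι)).toSphere.real univ := by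
  classical
  have : Nonempty ι := ⟨i⟩
  set σ := (volume : Measure (EuclideanSpace ℝ ι)).toSphere
  set d := Fintype.card ι
  have hd : 2 ≤ d := (Finset.card_pair hij).symm.le.trans (Finset.card_le_univ _)
  have hpair : (∫ u : sphere (0 : EuclideanSpace ℝ ι) 1,
      |(u : EuclideanSpace ℝ ι) i| * |(u : EuclideanSpace ℝ ι) j| ∂σ)
        * (d / 2 * Gamma (d / 2) / 2) = √π ^ (d - 2) := by
    have h := integral_mul_exp_neg_norm_sq_of_homogeneous (volume : Measure (EuclideanSpace ℝ ι))
      (g := fun x ↦ |x i| * |x j|) (p := 2) fun c x hc ↦ by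
        simp only [PiLp.smul_apply, smul_eq_mul, abs_mul, abs_of_nonneg hc]
        ring
    have h2 := integral_prod_abs_mul_exp_neg_norm_sq {i, j}
    simp only [Finset.prod_pair hij, Finset.card_pair hij] at h2
    rw [h2, finrank_euclideanSpace, Nat.cast_ofNat, add_div, div_self two_ne_zero,
      Gamma_add_one (by positivity)] at h
    exact h.symm
  have hπ : √π ^ d = √π ^ (d - 2) * π := by
    rw [← Nat.sub_add_cancel hd, pow_add, sq_sqrt pi_pos.le, Nat.add_sub_cancel]
  have hG : Gamma (d / 2) / 2 ≠ 0 := by positivity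
  rw [div_mul_eq_mul_div, eq_div_iff (by positivity)]
  apply mul_right_cancel₀ hG
  linear_combination (2 * π) * hpair - 2 * toSphere_real_univ_mul_Gamma (ι := ι) - 2 * hπ

lemma sq_sum_abs_eq_norm_sq_add_sum_offDiag [DecidableEq ι] (x : EuclideanSpace ℝ ι) :
    (∑ k, |x k|) ^ 2 = ‖x‖ ^ 2 + ∑ p ∈ Finset.univ.offDiag, |x p.1| * |x p.2| := by
  rw [sq, Finset.sum_mul_sum, ← Finset.sum_product', Finset.univ_product_univ,
    ← Finset.univ_product_univ, ← Finset.diag_union_offDiag,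
    Finset.sum_union (Finset.disjoint_diag_offDiag _), Finset.sum_diag, norm_sq_eq]
  simp only [Real.norm_eq_abs, sq]

lemma integral_sphere_sq_sum_abs [Nonempty ι] :
    ∫ u : sphere (0 : EuclideanSpace ℝ ι) 1, (∑ k, |(u : EuclideanSpace ℝ ι) k|) ^ 2
        ∂(volume : Measure (EuclideanSpace ℝ ι)).toSphere
      = (volume : Measure (EuclideanSpace ℝ ι)).toSphere.real univ
        * (1 + 2 * ((Fintype.card ι : ℝ) - 1) / π) := by
  classical
  set σ := (volume : Measure (EuclideanSpace ℝ ι)).toSphere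
  have hint (i j : ι) : Integrable (fun u : sphere (0 : EuclideanSpace ℝ ι) 1 ↦
      |(u : EuclideanSpace ℝ ι) i| * |(u : EuclideanSpace ℝ ι) j|) σ :=
    Continuous.integrable_of_hasCompactSupport (by fun_prop) (HasCompactSupport.of_compactSpace _)
  calc _ = ∫ u : sphere (0 : EuclideanSpace ℝ ι) 1, 1 + ∑ p ∈ Finset.univ.offDiag,
          |(u : EuclideanSpace ℝ ι) p.1| * |(u : EuclideanSpace ℝ ι) p.2| ∂σ := by
        congr 1 with u
        rw [sq_sum_abs_eq_norm_sq_add_sum_offDiag, norm_eq_of_mem_sphere, one_pow]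
    _ = σ.real univ
          + ∑ p ∈ (Finset.univ : Finset ι).offDiag, 2 / (Fintype.card ι * π) * σ.real univ := by
        rw [integral_add (integrable_const _) (integrable_finsetSum _ fun p _ ↦ hint p.1 p.2),
          integral_finsetSum _ fun p _ ↦ hint p.1 p.2, integral_const, smul_eq_mul, mul_one]
        exact congrArg _ (Finset.sum_congr rfl fun p hp ↦
          integral_sphere_abs_mul_abs (Finset.mem_offDiag.1 hp).2.2)
    _ = _ := by
        rw [Finset.sum_const, Finset.offDiag_card, Finset.card_univ, nsmul_eq_mul,
          Nat.cast_sub (Nat.le_mul_self _), Nat.cast_mul]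
        have : (Fintype.card ι : ℝ) ≠ 0 := by positivity
        field_simp

end EuclideanSpace

/-- The mean squared width of the unit `n`-cube, i.e. the average of `∑ᵢ |uᵢ|` over `u`
uniform on the unit sphere `S^{n-1}`, equals `1 + 2(n-1)/π`. -/
theorem stmt16 (n : ℕ) (hn : 1 ≤ n)
    (μ : Measure (Metric.sphere (0 : EuclideanSpace ℝ (Fin n)) 1))
    (hμ : μ = (volume : Measure (EuclideanSpace ℝ (Fin n))).toSphere) :
    (∫ u : Metric.sphere (0 : EuclideanSpace ℝ (Fin n)) 1,
        (∑ i, |(u : EuclideanSpace ℝ (Fin n)) i|)^2 ∂μ) / (μ Set.univ).toReal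
      = 1 + 2 * ((n : ℝ) - 1) / π := by
  subst hμ
  have : Nonempty (Fin n) := ⟨⟨0, hn⟩⟩
  have : NeZero (volume : Measure (EuclideanSpace ℝ (Fin n))).toSphere :=
    ⟨Measure.toSphere_ne_zero _⟩
  rw [EuclideanSpace.integral_sphere_sq_sum_abs, Fintype.card_fin, ← measureReal_def,
    mul_div_cancel_left₀ _ measureReal_univ_ne_zero]
end

section
/- The function p(y) = ∫_{-∞}^{∞} exp(-x - e^{-x})·exp(-(y-x) - e^{-(y-x)}) dx satisfies p(y) = 2e^{-y}·K₀(2e^{-y/2}) for all real y, where K₀ is the modified Bessel function of the second kind of order 0. -/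
open Real MeasureTheory

/-- The modified Bessel function of the second kind of order 0:
`K₀(z) = ∫₀^∞ e^{-z cosh t} dt`. -/
noncomputable def besselK0 (z : ℝ) : ℝ :=
  ∫ t in Set.Ioi (0:ℝ), Real.exp (-z * Real.cosh t)

/-- The convolution of two standard Gumbel densities:
`∫ exp(-x - e^{-x})·exp(-(y-x) - e^{-(y-x)}) dx = 2 e^{-y} K₀(2 e^{-y/2})`. -/
theorem stmt17 (y : ℝ) :
    (∫ x : ℝ, Real.exp (-x - Real.exp (-x)) * Real.exp (-(y-x) - Real.exp (-(y-x))))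
      = 2 * Real.exp (-y) * besselK0 (2 * Real.exp (-y/2)) := by
  have h1 : ∀ x : ℝ, Real.exp (-x - Real.exp (-x)) * Real.exp (-(y-x) - Real.exp (-(y-x)))
      = Real.exp (-y) * Real.exp (-(2 * Real.exp (-y/2)) * Real.cosh (x - y/2)) := by
    intro x
    rw [← Real.exp_add, ← Real.exp_add]
    have e1 : Real.exp (-(y-x)) = Real.exp (-y/2) * Real.exp (x - y/2) := by
      rw [← Real.exp_add]; exact congrArg Real.exp (by ring)
    have e2 : Real.exp (-x) = Real.exp (-y/2) * Real.exp (-(x - y/2)) := by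
      rw [← Real.exp_add]; exact congrArg Real.exp (by ring)
    rw [Real.cosh_eq, e1, e2]
    exact congrArg Real.exp (by ring)
  simp_rw [h1, integral_const_mul]
  have h2 : (∫ x : ℝ, Real.exp (-(2 * Real.exp (-y/2)) * Real.cosh (x - y/2)))
      = ∫ x : ℝ, Real.exp (-(2 * Real.exp (-y/2)) * Real.cosh x) :=
    integral_sub_right_eq_self (fun x => Real.exp (-(2 * Real.exp (-y/2)) * Real.cosh x)) (y/2)
  rw [h2]
  have h3 : (∫ x : ℝ, Real.exp (-(2 * Real.exp (-y/2)) * Real.cosh x))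
      = ∫ x : ℝ, Real.exp (-(2 * Real.exp (-y/2)) * Real.cosh |x|) := by
    congr 1; funext x; rw [Real.cosh_abs]
  rw [h3, integral_comp_abs (f := fun x => Real.exp (-(2 * Real.exp (-y/2)) * Real.cosh x))]
  rw [besselK0]
  ring
end
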